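/- arXiv:2001.06814 — 3 statements merged into one kernel-verified Lean document; each statement's English description precedes it below -/
import Mathlib

section
/- Let n ≥ 1, let l = (l_1, …, l_n) ∈ ℝⁿ, let l̄ = (1/n)·Σᵢ lᵢ denote the empirical mean and s_n² = (1/n)·Σᵢ (lᵢ − l̄)² the empirical variance, and for ρ ≥ 0 let OPT = inf { Σᵢ pᵢ lᵢ : p ∈ P_{n,ρ} }. Then l̄ − OPT ≤ √(2 ρ s_n²). -/
open Finset Real

/-- The `n`-dimensional probability simplex. -/
def simplex (n : ℕ) : Set (Fin n → ℝ) :=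
  {p | (∀ i, 0 ≤ p i) ∧ ∑ i, p i = 1}

/-- The χ² ball of radius `ρ` around the empirical (uniform) distribution. -/
def chiSqBall (n : ℕ) (ρ : ℝ) : Set (Fin n → ℝ) :=
  {p ∈ simplex n | (1 / (2 * (n : ℝ))) * ∑ i, ((n : ℝ) * p i - 1) ^ 2 ≤ ρ}

theorem stmt0 (n : ℕ) (hn : 1 ≤ n) (l : Fin n → ℝ) (ρ : ℝ) (hρ : 0 ≤ ρ)
    (lbar sn2 OPT : ℝ)
    (hlbar : lbar = (1 / (n : ℝ)) * ∑ i, l i)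
    (hsn2 : sn2 = (1 / (n : ℝ)) * ∑ i, (l i - lbar) ^ 2)
    (hOPT : OPT = sInf ((fun p => ∑ i, p i * l i) '' chiSqBall n ρ)) :
    lbar - OPT ≤ Real.sqrt (2 * ρ * sn2) := by
  have hn0 : (0 : ℝ) < n := by exact_mod_cast hn
  have hn0' : (n : ℝ) ≠ 0 := ne_of_gt hn0
  -- the uniform distribution is in the ball
  have hunif : (fun _ : Fin n => 1 / (n : ℝ)) ∈ chiSqBall n ρ := by
    refine ⟨⟨fun i => by positivity, ?_⟩, ?_⟩
    · simp [Finset.sum_const, Finset.card_fin]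
      field_simp
    · have h0 : ((n : ℝ) * (1 / n) - 1) ^ 2 = 0 := by
        have : ((n : ℝ) * (1 / n) - 1) = 0 := by field_simp; ring
        rw [this]; ring
      simp only [h0, Finset.sum_const, smul_zero, mul_zero]
      exact hρ
  have hne : ((fun p => ∑ i, p i * l i) '' chiSqBall n ρ).Nonempty :=
    ⟨_, Set.mem_image_of_mem _ hunif⟩
  have hsn2nonneg : 0 ≤ sn2 := by rw [hsn2]; positivity
  -- every element of the image is ≥ lbar - √(2ρ sn2)
  have hlb : ∀ x ∈ (fun p => ∑ i, p i * l i) '' chiSqBall n ρ,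
      lbar - Real.sqrt (2 * ρ * sn2) ≤ x := by
    rintro x ⟨p, hp, rfl⟩
    obtain ⟨⟨hppos, hpsum⟩, hball⟩ := hp
    have key : ∑ i, ((1 / (n : ℝ) - p i) * (l i - lbar)) = lbar - ∑ i, p i * l i := by
      have expand : ∀ i ∈ Finset.univ, (1 / (n : ℝ) - p i) * (l i - lbar)
          = (1 / (n : ℝ)) * l i - (1 / (n : ℝ)) * lbar - p i * l i + p i * lbar :=
        fun i _ => by ring
      rw [Finset.sum_congr rfl expand]
      have s1 : ∑ _i : Fin n, (1 / (n : ℝ)) * lbar = lbar := by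
        rw [Finset.sum_const, Finset.card_fin, nsmul_eq_mul]; field_simp
      have s2 : ∑ i, p i * lbar = lbar := by rw [← Finset.sum_mul, hpsum, one_mul]
      have s3 : ∑ i, (1 / (n : ℝ)) * l i = lbar := by rw [← Finset.mul_sum, ← hlbar]
      rw [Finset.sum_add_distrib, Finset.sum_sub_distrib, Finset.sum_sub_distrib, s1, s2, s3]
      ring
    -- Cauchy-Schwarz
    have hcs := Finset.sum_mul_sq_le_sq_mul_sq Finset.univ
      (fun i => 1 / (n : ℝ) - p i) (fun i => l i - lbar)
    have ha : ∑ i, (1 / (n : ℝ) - p i) ^ 2 ≤ 2 * ρ / n := by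
      have e2 : ∀ i : Fin n, (1 / (n : ℝ) - p i) ^ 2 = ((n : ℝ) * p i - 1) ^ 2 / n ^ 2 := by
        intro i; field_simp; ring
      rw [Finset.sum_congr rfl (fun i _ => e2 i), ← Finset.sum_div]
      have h3 : ∑ i, ((n : ℝ) * p i - 1) ^ 2 ≤ 2 * n * ρ := by
        rw [div_mul_eq_mul_div, one_mul, div_le_iff₀ (by positivity)] at hball
        linarith
      have he : (2 * ρ / (n : ℝ)) = (2 * (n : ℝ) * ρ) / (n : ℝ) ^ 2 := by
        field_simp
      rw [he]
      gcongr
    have hb : ∑ i, (l i - lbar) ^ 2 = n * sn2 := by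
      rw [hsn2]; field_simp
    have hsq : (lbar - ∑ i, p i * l i) ^ 2 ≤ 2 * ρ * sn2 := by
      rw [← key]
      calc (∑ i, ((1 / (n : ℝ) - p i) * (l i - lbar))) ^ 2
          ≤ (∑ i, (1 / (n : ℝ) - p i) ^ 2) * ∑ i, (l i - lbar) ^ 2 := hcs
        _ ≤ (2 * ρ / n) * (n * sn2) := by
            apply mul_le_mul ha (le_of_eq hb) (by positivity) (by positivity)
        _ = 2 * ρ * sn2 := by field_simp
    have h4 : lbar - ∑ i, p i * l i ≤ Real.sqrt (2 * ρ * sn2) := by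
      calc lbar - ∑ i, p i * l i ≤ |lbar - ∑ i, p i * l i| := le_abs_self _
        _ = Real.sqrt ((lbar - ∑ i, p i * l i) ^ 2) := (Real.sqrt_sq_eq_abs _).symm
        _ ≤ Real.sqrt (2 * ρ * sn2) := Real.sqrt_le_sqrt hsq
    linarith
  have : lbar - Real.sqrt (2 * ρ * sn2) ≤ OPT := by
    rw [hOPT]; exact le_csInf hne hlb
  linarith
end

section
/- Let n ≥ 1, let l = (l_1, …, l_n) ∈ ℝⁿ with M₀ ≤ lᵢ ≤ M₁ for all i, set M = M₁ − M₀, let l̄ = (1/n)·Σᵢ lᵢ, s_n² = (1/n)·Σᵢ (lᵢ − l̄)², and for ρ ≥ 0 let OPT = inf { Σᵢ pᵢ lᵢ : p ∈ P_{n,ρ} }. Then l̄ − OPT ≥ max { √(2 ρ s_n²) − 2 M ρ, 0 }. -/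
open Finset Real

set_option maxHeartbeats 2000000 in
theorem stmt1 (n : ℕ) (hn : 1 ≤ n) (l : Fin n → ℝ) (M₀ M₁ : ℝ)
    (hbdd : ∀ i, l i ∈ Set.Icc M₀ M₁)
    (M : ℝ) (hM : M = M₁ - M₀)
    (ρ : ℝ) (hρ : 0 ≤ ρ)
    (lbar sn2 OPT : ℝ)
    (hlbar : lbar = (1 / (n : ℝ)) * ∑ i, l i)
    (hsn2 : sn2 = (1 / (n : ℝ)) * ∑ i, (l i - lbar) ^ 2)
    (hOPT : OPT = sInf ((fun p => ∑ i, p i * l i) '' chiSqBall n ρ)) :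
    max (Real.sqrt (2 * ρ * sn2) - 2 * M * ρ) 0 ≤ lbar - OPT := by
  have hn0 : (0:ℝ) < n := by exact_mod_cast hn
  have hnne : (n:ℝ) ≠ 0 := ne_of_gt hn0
  -- the image is bounded below
  have hbb : BddBelow ((fun p => ∑ i, p i * l i) '' chiSqBall n ρ) := by
    refine ⟨M₀, ?_⟩
    rintro x ⟨p, ⟨⟨hp0, hp1⟩, _⟩, rfl⟩
    calc M₀ = ∑ i, p i * M₀ := by rw [← Finset.sum_mul, hp1, one_mul]
    _ ≤ ∑ i, p i * l i :=
      Finset.sum_le_sum fun i _ => mul_le_mul_of_nonneg_left (hbdd i).1 (hp0 i)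
  -- sums
  have hS1 : ∑ i, l i = n * lbar := by rw [hlbar]; field_simp
  have hS2 : ∑ i, (l i - lbar)^2 = n * sn2 := by rw [hsn2]; field_simp
  -- uniform distribution is in the ball
  have huni : (fun _ : Fin n => 1/(n:ℝ)) ∈ chiSqBall n ρ := by
    have h0 : ((n:ℝ) * (1/(n:ℝ)) - 1) = 0 := by field_simp; ring
    refine ⟨⟨fun i => by positivity, ?_⟩, ?_⟩
    · simp only [Finset.sum_const, Finset.card_fin, nsmul_eq_mul]
      field_simp
    · have h0' : ∀ i : Fin n, ((n:ℝ) * (1/(n:ℝ)) - 1)^2 = 0 := fun _ => by rw [h0]; ring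
      rw [Finset.sum_congr rfl fun i _ => h0' i, Finset.sum_const]
      simpa using hρ
  have hOPT_le : OPT ≤ lbar := by
    rw [hOPT]
    have hval : (fun p : Fin n → ℝ => ∑ i, p i * l i) (fun _ => 1/(n:ℝ)) = lbar := by
      simp only
      rw [hlbar, Finset.mul_sum]
    rw [← hval]
    exact csInf_le hbb ⟨_, huni, rfl⟩
  rw [max_le_iff]
  refine ⟨?_, by linarith⟩
  by_cases hcase : Real.sqrt (2 * ρ * sn2) ≤ 2 * M * ρ
  · linarith
  push_neg at hcase
  -- basic positivity facts
  have hMnn : 0 ≤ M := by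
    have h0 := hbdd ⟨0, hn⟩
    rw [hM]; linarith [h0.1, h0.2]
  have hsn2nn : 0 ≤ sn2 := by
    rw [hsn2]; positivity
  have hsqnn : 0 ≤ 2 * M * ρ := by positivity
  have hsq : (2*M*ρ)^2 < 2 * ρ * sn2 := (Real.lt_sqrt hsqnn).mp hcase
  have hρpos : 0 < ρ := by nlinarith
  have hkey : 2 * ρ * M^2 < sn2 := by nlinarith
  have hsn2pos : 0 < sn2 := by nlinarith
  -- the witness
  set t := Real.sqrt (2*ρ/sn2) with ht
  have htnn : 0 ≤ t := Real.sqrt_nonneg _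
  have ht2 : t^2 = 2*ρ/sn2 := Real.sq_sqrt (by positivity)
  have htM2 : (t*M)^2 < 1 := by
    rw [mul_pow, ht2, div_mul_eq_mul_div, div_lt_one hsn2pos]
    nlinarith
  have htM : t * M < 1 := by nlinarith [mul_nonneg htnn hMnn]
  have hdev : ∀ i, l i - lbar ≤ M := by
    intro i
    have hub := (hbdd i).2
    have hlb : M₀ ≤ lbar := by
      have h1 : (n:ℝ) * M₀ ≤ ∑ i, l i := by
        calc (n:ℝ) * M₀ = ∑ _i : Fin n, M₀ := by
              simp [Finset.sum_const, Finset.card_fin, mul_comm]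
        _ ≤ ∑ i, l i := Finset.sum_le_sum fun i _ => (hbdd i).1
      rw [hS1] at h1
      nlinarith
    rw [hM]; linarith
  set p : Fin n → ℝ := fun i => (1/(n:ℝ)) * (1 + t * (lbar - l i)) with hp
  have hsum0 : ∑ i, (lbar - l i) = 0 := by
    rw [Finset.sum_sub_distrib, Finset.sum_const, Finset.card_fin, hS1]
    ring
  have hsum0' : ∑ i, (l i - lbar) = 0 := by
    rw [Finset.sum_sub_distrib, Finset.sum_const, Finset.card_fin, hS1]
    ring
  have hpmem : p ∈ chiSqBall n ρ := by
    refine ⟨⟨?_, ?_⟩, ?_⟩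
    · intro i
      have h1 : t * (l i - lbar) ≤ t * M := mul_le_mul_of_nonneg_left (hdev i) htnn
      have h2 : 0 ≤ 1 + t * (lbar - l i) := by nlinarith
      simp only [hp]
      positivity
    · simp only [hp]
      simp only [← Finset.mul_sum]
      rw [Finset.sum_add_distrib, ← Finset.mul_sum, hsum0, Finset.sum_const, Finset.card_fin]
      field_simp
      simp
    · have hterm : ∀ i : Fin n, ((n:ℝ) * p i - 1)^2 = t^2 * (l i - lbar)^2 := by
        intro i
        simp only [hp]
        field_simp
        ring
      rw [Finset.sum_congr rfl fun i _ => hterm i, ← Finset.mul_sum, hS2, ht2]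
      have heq : 1/(2*(n:ℝ)) * (2*ρ/sn2 * ((n:ℝ)*sn2)) = ρ := by
        field_simp
      exact le_of_eq heq
  -- the value at the witness
  have hval : ∑ i, p i * l i = lbar - t * sn2 := by
    have hterm : ∀ i : Fin n, p i * l i
        = (1/(n:ℝ)) * l i - (t/(n:ℝ)) * (l i - lbar)^2 - (t*lbar/(n:ℝ)) * (l i - lbar) := by
      intro i; simp only [hp]; ring
    rw [Finset.sum_congr rfl fun i _ => hterm i, Finset.sum_sub_distrib,
      Finset.sum_sub_distrib, ← Finset.mul_sum, ← Finset.mul_sum, ← Finset.mul_sum,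
      hS1, hS2, hsum0']
    field_simp
    ring
  have htsn2 : t * sn2 = Real.sqrt (2*ρ*sn2) := by
    have h1 : (t*sn2)^2 = 2*ρ*sn2 := by
      rw [mul_pow, ht2]
      field_simp
    rw [← h1, Real.sqrt_sq (mul_nonneg htnn hsn2nn)]
  have hOPT_le2 : OPT ≤ lbar - Real.sqrt (2*ρ*sn2) := by
    rw [hOPT, ← htsn2, ← hval]
    exact csInf_le hbb ⟨p, hpmem, rfl⟩
  linarith
end

section
/- Let n ≥ 1 and l = (l_1, …, l_n) ∈ ℝⁿ. If ρ ≥ (n − 1)/2, then inf { Σᵢ pᵢ lᵢ : p ∈ P_{n,ρ} } = min_{1 ≤ i ≤ n} lᵢ. -/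
open Finset Real

theorem stmt8 (n : ℕ) (hn : 0 < n) (l : Fin n → ℝ) (ρ : ℝ)
    (hρ : ((n : ℝ) - 1) / 2 ≤ ρ) :
    sInf ((fun p => ∑ i, p i * l i) '' chiSqBall n ρ)
      = Finset.univ.inf' ⟨⟨0, hn⟩, Finset.mem_univ _⟩ l := by
  set m := Finset.univ.inf' ⟨⟨0, hn⟩, Finset.mem_univ _⟩ l with hm
  obtain ⟨i₀, -, hi₀⟩ := Finset.exists_mem_eq_inf' ⟨⟨0, hn⟩, Finset.mem_univ _⟩ l
  have hnR : (0:ℝ) < n := by exact_mod_cast hn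
  apply IsLeast.csInf_eq
  constructor
  · refine ⟨fun j => if j = i₀ then 1 else 0, ?_, ?_⟩
    · refine ⟨⟨fun i => by positivity, by simp⟩, ?_⟩
      have hsum : ∑ i : Fin n, ((n : ℝ) * (if i = i₀ then (1:ℝ) else 0) - 1) ^ 2
          = (n : ℝ) * ((n:ℝ) - 1) := by
        have : ∀ i : Fin n, ((n : ℝ) * (if i = i₀ then (1:ℝ) else 0) - 1) ^ 2
            = (if i = i₀ then ((n:ℝ)-1)^2 - 1 else 0) + 1 := by
          intro i; split_ifs <;> ring
        rw [Finset.sum_congr rfl fun i _ => this i, Finset.sum_add_distrib,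
          Finset.sum_ite_eq' Finset.univ i₀ (fun _ => ((n:ℝ)-1)^2 - 1)]
        simp [Finset.card_univ]
        ring
      rw [hsum]
      calc 1 / (2 * (n:ℝ)) * ((n:ℝ) * ((n:ℝ) - 1)) = ((n:ℝ) - 1) / 2 := by
            field_simp
        _ ≤ ρ := hρ
    · simp only []
      rw [Finset.sum_congr rfl (fun i _ => by
        show (if i = i₀ then (1:ℝ) else 0) * l i = if i = i₀ then l i else 0
        split_ifs <;> simp),
        Finset.sum_ite_eq' Finset.univ i₀ l]
      simp [hm, hi₀]
  · rintro x ⟨p, ⟨⟨hp0, hp1⟩, -⟩, rfl⟩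
    calc m = ∑ i, p i * m := by rw [← Finset.sum_mul, hp1, one_mul]
      _ ≤ ∑ i, p i * l i := by
          apply Finset.sum_le_sum
          intro i _
          exact mul_le_mul_of_nonneg_left (Finset.inf'_le l (Finset.mem_univ i)) (hp0 i)
end
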